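/- arXiv:2304.07163 — 3 statements merged into one kernel-verified Lean document; each statement's English description precedes it below -/
import Mathlib

section
/- For a 2-armed bandit over T rounds where the expected reward of arm O after its n-th pull is ρ_O(n), with ρ_O nondecreasing in n (ρ_O(n) ≥ ρ_O(n-1)) and independent of the pulls of the other arm, there exists a single arm i* ∈ {0,1} such that the policy pulling i* in all T rounds maximizes the expected cumulative reward J(μ,T) = Σ_{i=1}^{n_0} ρ_0(i) + Σ_{i=1}^{n_1} ρ_1(i) over all policies μ. -/
open Finset

/-- Expected cumulative reward of a 2-armed bandit policy `μ` over `T` rounds: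
`J(μ,T) = Σ_{i=1}^{n_0} ρ_0(i) + Σ_{i=1}^{n_1} ρ_1(i)` where `n_a` is the number of
pulls of arm `a` under `μ` and `ρ a i` is the expected reward of the `i`-th pull of arm `a`. -/
noncomputable def banditJ {T : ℕ} (ρ : Fin 2 → ℕ → ℝ) (μ : Fin T → Fin 2) : ℝ :=
  ∑ a : Fin 2, ∑ i ∈ Finset.range ({t | μ t = a} : Finset (Fin T)).card, ρ a (i + 1)

/-- The value of a policy pulling arm 0 exactly `n` times (and arm 1 `T - n` times). -/
noncomputable def banditF (T : ℕ) (ρ : Fin 2 → ℕ → ℝ) (n : ℕ) : ℝ :=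
  (∑ i ∈ Finset.range n, ρ 0 (i + 1)) + ∑ i ∈ Finset.range (T - n), ρ 1 (i + 1)

lemma banditF_step (T : ℕ) (ρ : Fin 2 → ℕ → ℝ) (m : ℕ) (hm : m < T) :
    banditF T ρ (m + 1) = banditF T ρ m + ρ 0 (m + 1) - ρ 1 (T - m) := by
  have h1 : T - m = (T - (m + 1)) + 1 := by omega
  rw [banditF, banditF, Finset.sum_range_succ, h1, Finset.sum_range_succ]
  have : T - (m + 1) + 1 = T - m := by omega
  rw [this]
  ring

lemma banditF_up (T : ℕ) (ρ : Fin 2 → ℕ → ℝ) (hmono : ∀ a : Fin 2, Monotone (ρ a))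
    (n : ℕ) (hd : ρ 1 (T - n) ≤ ρ 0 (n + 1)) :
    ∀ m, n ≤ m → m ≤ T → banditF T ρ n ≤ banditF T ρ m := by
  intro m
  induction m with
  | zero => intro h1 _; interval_cases n; exact le_refl _
  | succ k ih =>
    intro h1 h2
    rcases Nat.lt_or_ge n (k + 1) with h | h
    · have hnk : n ≤ k := by omega
      have hk : k < T := by omega
      have := ih hnk (by omega)
      have hstep : banditF T ρ k ≤ banditF T ρ (k + 1) := by
        rw [banditF_step T ρ k hk]
        have h3 : ρ 0 (n + 1) ≤ ρ 0 (k + 1) := hmono 0 (by omega)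
        have h4 : ρ 1 (T - k) ≤ ρ 1 (T - n) := hmono 1 (by omega)
        linarith
      linarith
    · have : n = k + 1 := by omega
      rw [this]

lemma banditF_down (T : ℕ) (ρ : Fin 2 → ℕ → ℝ) (hmono : ∀ a : Fin 2, Monotone (ρ a))
    (n : ℕ) (hn : n ≤ T) (hd : ρ 0 (n + 1) ≤ ρ 1 (T - n)) :
    ∀ m, m ≤ n → banditF T ρ n ≤ banditF T ρ (n - m) := by
  intro m
  induction m with
  | zero => intro _; simp
  | succ k ih =>
    intro h1
    have hk : k ≤ n := by omega
    have := ih hk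
    set m' := n - k - 1 with hm'
    have hm'T : m' < T := by omega
    have hstep : banditF T ρ (m' + 1) ≤ banditF T ρ m' := by
      rw [banditF_step T ρ m' hm'T]
      have h3 : ρ 0 (m' + 1) ≤ ρ 0 (n + 1) := hmono 0 (by omega)
      have h4 : ρ 1 (T - n) ≤ ρ 1 (T - m') := hmono 1 (by omega)
      linarith
    have e1 : m' + 1 = n - k := by omega
    have e2 : m' = n - (k + 1) := by omega
    rw [e1, e2] at hstep
    linarith

lemma banditF_le_max (T : ℕ) (ρ : Fin 2 → ℕ → ℝ) (hmono : ∀ a : Fin 2, Monotone (ρ a))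
    (n : ℕ) (hn : n ≤ T) :
    banditF T ρ n ≤ max (banditF T ρ 0) (banditF T ρ T) := by
  rcases le_total (ρ 0 (n + 1)) (ρ 1 (T - n)) with h | h
  · have := banditF_down T ρ hmono n hn h n le_rfl
    simp only [Nat.sub_self] at this
    exact le_trans this (le_max_left _ _)
  · exact le_trans (banditF_up T ρ hmono n h T hn le_rfl) (le_max_right _ _)

lemma banditJ_eq (T : ℕ) (ρ : Fin 2 → ℕ → ℝ) (μ : Fin T → Fin 2) :
    banditJ ρ μ = banditF T ρ ({t | μ t = 0} : Finset (Fin T)).card ∧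
      ({t | μ t = 0} : Finset (Fin T)).card ≤ T := by
  have h2 : ∀ b : Fin 2, (¬ b = 0) ↔ b = 1 := by decide
  have hsum : ({t | μ t = 0} : Finset (Fin T)).card +
      ({t | μ t = 1} : Finset (Fin T)).card = T := by
    have := Finset.card_filter_add_card_filter_not
      (s := (univ : Finset (Fin T))) (p := fun t => μ t = 0)
    simp only [h2] at this
    simpa using this
  refine ⟨?_, by omega⟩
  rw [banditJ, Fin.sum_univ_two, banditF]
  have hc : ({t | μ t = 1} : Finset (Fin T)).card =
      T - ({t | μ t = 0} : Finset (Fin T)).card := by omega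
  rw [hc]

/-- Proposition 1 (Heidari et al., 2016): with monotone nondecreasing expected
rewards, some constant policy (pulling a single arm `i*` in every round) maximizes
the expected cumulative reward over all policies. -/
theorem stmt0 (T : ℕ) (ρ : Fin 2 → ℕ → ℝ) (hmono : ∀ a : Fin 2, Monotone (ρ a)) :
    ∃ istar : Fin 2, ∀ μ : Fin T → Fin 2,
      banditJ ρ μ ≤ banditJ ρ (fun _ : Fin T => istar) := by
  have hconst0 : banditJ ρ (fun _ : Fin T => (0 : Fin 2)) = banditF T ρ T := by
    have h := (banditJ_eq T ρ (fun _ : Fin T => (0 : Fin 2))).1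
    have hc : ({t | (fun _ : Fin T => (0 : Fin 2)) t = 0} : Finset (Fin T)).card = T := by
      simp
    rwa [hc] at h
  have hconst1 : banditJ ρ (fun _ : Fin T => (1 : Fin 2)) = banditF T ρ 0 := by
    have h := (banditJ_eq T ρ (fun _ : Fin T => (1 : Fin 2))).1
    have hc : ({t | (fun _ : Fin T => (1 : Fin 2)) t = 0} : Finset (Fin T)).card = 0 := by
      simp
    rwa [hc] at h
  rcases le_total (banditF T ρ 0) (banditF T ρ T) with h | h
  · refine ⟨0, fun μ => ?_⟩
    obtain ⟨he, hle⟩ := banditJ_eq T ρ μ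
    rw [he, hconst0]
    have := banditF_le_max T ρ hmono _ hle
    simpa [max_eq_right h] using this
  · refine ⟨1, fun μ => ?_⟩
    obtain ⟨he, hle⟩ := banditJ_eq T ρ μ
    rw [he, hconst1]
    have := banditF_le_max T ρ hmono _ hle
    simpa [max_eq_left h] using this
end

section
/- With the same setup, for any policy μ that pulls each arm at least once, the constant policy that always pulls the arm O maximizing Σ_{i=1}^{T} ρ_O(i) achieves J at least as large as J(μ,T); moreover if both ρ_0 and ρ_1 are strictly increasing and Σ_{i=1}^{T} ρ_0(i) ≠ Σ_{i=1}^{T} ρ_1(i), the maximizing constant policy is the unique optimal policy among all constant policies. -/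
/-!
By monotonicity, the mean of the first `n` rewards of an arm is at most the mean of its first
`T ≥ n` rewards. Hence, if a policy pulls arm `a` exactly `nₐ` times, its value is at most
`∑ₐ (nₐ / T) Sₐ` with `Sₐ = ∑_{i ≤ T} ρₐ(i)`, a convex combination of the `Sₐ`, which is at most
`S_o`, the value of always pulling `o`. When `S₀ ≠ S₁` the map `a ↦ Sₐ` is injective on the two
arms, so only `o` attains the maximum.
-/

open Finset

section
variable {α : Type*} [CommSemiring α] [LinearOrder α] [IsStrictOrderedRing α] [ExistsAddOfLE α]

-- Chebyshev's sum inequality for `f` against the antitone indicator of `range n`.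
theorem mul_sum_range_le_mul_sum_range {f : ℕ → α} (hf : Monotone f) {n T : ℕ} (hnT : n ≤ T) :
    T * ∑ i ∈ range n, f i ≤ n * ∑ i ∈ range T, f i := by
  set g : ℕ → α := fun i => if i ∈ range n then 1 else 0
  have hg : Antitone g := fun i j hij => by
    simp only [g, mem_range]
    split_ifs <;> first | omega | simp
  have hsub : range T ∩ range n = range n := inter_eq_right.mpr (range_subset_range.mpr hnT)
  have hfg : ∑ i ∈ range T, f i * g i = ∑ i ∈ range n, f i := by
    simp only [g, mul_ite, mul_one, mul_zero, sum_ite_mem, hsub]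
  have hgsum : ∑ i ∈ range T, g i = n := by
    simp only [g, sum_ite_mem, hsub, sum_const, card_range, nsmul_one]
  have := ((hf.antivary hg).antivaryOn (range T)).card_mul_sum_le_sum_mul_sum
  rwa [hfg, hgsum, card_range, mul_comm _ (n : α)] at this

theorem sum_sum_range_card_fiber_le {ι : Type*} [Fintype ι] [DecidableEq ι] {T : ℕ}
    (ρ : ι → ℕ → α) (hρ : ∀ a, Monotone (ρ a)) (o : ι)
    (ho : ∀ a, ∑ i ∈ range T, ρ a i ≤ ∑ i ∈ range T, ρ o i) (μ : Fin T → ι) :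
    ∑ a, ∑ i ∈ range #{t | μ t = a}, ρ a i ≤ ∑ i ∈ range T, ρ o i := by
  rcases T.eq_zero_or_pos with rfl | hT
  · simp
  have hcard : ∑ a, (#{t | μ t = a} : α) = T := by
    have := card_eq_sum_card_fiberwise (f := μ) (s := univ) (t := univ) fun _ _ => mem_univ _
    rw [card_univ, Fintype.card_fin] at this
    exact_mod_cast this.symm
  refine le_of_mul_le_mul_left ?_ (Nat.cast_pos.mpr hT)
  calc (T : α) * ∑ a, ∑ i ∈ range #{t | μ t = a}, ρ a i
      = ∑ a, T * ∑ i ∈ range #{t | μ t = a}, ρ a i := mul_sum ..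
    _ ≤ ∑ a, #{t | μ t = a} * ∑ i ∈ range T, ρ a i := by
      refine sum_le_sum fun a _ => mul_sum_range_le_mul_sum_range (hρ a) ?_
      exact (card_filter_le _ _).trans_eq (card_fin T)
    _ ≤ ∑ a, #{t | μ t = a} * ∑ i ∈ range T, ρ o i :=
      sum_le_sum fun a _ => mul_le_mul_of_nonneg_left (ho a) (Nat.cast_nonneg _)
    _ = T * ∑ i ∈ range T, ρ o i := by rw [← sum_mul, hcard]

end

theorem banditJ_const {T : ℕ} (ρ : Fin 2 → ℕ → ℝ) (a : Fin 2) :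
    banditJ ρ (fun _ : Fin T => a) = ∑ i ∈ range T, ρ a (i + 1) := by
  fin_cases a <;> simp [banditJ]

/-- For any policy pulling each arm at least once, the constant policy on the arm `o`
maximizing `Σ_{i=1}^T ρ_o(i)` has at least as large a value `J`; and if both reward
sequences are strictly increasing and the two total sums differ, then `o` is the unique
optimal arm among constant policies. -/
theorem stmt1 (T : ℕ) (ρ : Fin 2 → ℕ → ℝ) (hmono : ∀ a : Fin 2, Monotone (ρ a))
    (o : Fin 2)
    (ho : ∀ a : Fin 2, ∑ i ∈ Finset.range T, ρ a (i + 1) ≤ ∑ i ∈ Finset.range T, ρ o (i + 1)) :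
    (∀ μ : Fin T → Fin 2, (∀ a : Fin 2, ∃ t, μ t = a) →
        banditJ ρ μ ≤ banditJ ρ (fun _ : Fin T => o)) ∧
    ((∀ a : Fin 2, StrictMono (ρ a)) →
      (∑ i ∈ Finset.range T, ρ 0 (i + 1)) ≠ (∑ i ∈ Finset.range T, ρ 1 (i + 1)) →
      ∀ o' : Fin 2,
        (∀ a : Fin 2, banditJ ρ (fun _ : Fin T => a) ≤ banditJ ρ (fun _ : Fin T => o')) →
        o' = o) := by
  refine ⟨fun μ _ => ?_, fun _ hne o' hopt => ?_⟩
  · rw [banditJ_const]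
    exact sum_sum_range_card_fiber_le (fun a i => ρ a (i + 1))
      (fun a => (hmono a).comp add_left_mono) o ho μ
  · have hinj : Function.Injective fun a : Fin 2 => ∑ i ∈ range T, ρ a (i + 1) := by
      intro a b
      fin_cases a <;> fin_cases b <;> simp [hne, hne.symm]
    have hopt_o : ∑ i ∈ range T, ρ o (i + 1) ≤ ∑ i ∈ range T, ρ o' (i + 1) := by
      simpa only [banditJ_const] using hopt o
    exact hinj ((ho o').antisymm hopt_o)
end

section
/- Under the monotone bandit assumption, if arm Q's reward sequence ρ_Q converges to the optimal value v* and arm Φ's sequence ρ_Φ converges to a strictly smaller value v < v*, then there exists N such that for all T with n_Q ≥ N pulls of Q, the constant-Q policy over the remaining rounds has strictly higher expected value than any policy that pulls Φ at least once in the remaining rounds, for all sufficiently many remaining rounds. -/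
open Finset Filter

/-!
A nondecreasing sequence stays below its limit, so every pull of Φ earns at most `v`, while
after `N` pulls every pull of Q earns more than `v`. Hence, once `n_Q ≥ N`, each Φ-pull of a
policy is strictly worse than the Q-pull the constant-Q policy makes in the same slot, and the
comparison holds for every number of remaining rounds.
-/

theorem sum_range_add_sum_range_sub_lt {M : Type*} [AddCommMonoid M] [PartialOrder M]
    [IsOrderedCancelAddMonoid M] {f g : ℕ → M} {k h : ℕ} (hkh : k < h)
    (hgf : ∀ i, g i < f (k + i)) :
    (∑ i ∈ range k, f i) + ∑ i ∈ range (h - k), g i < ∑ i ∈ range h, f i := by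
  obtain ⟨d, rfl⟩ := Nat.exists_eq_add_of_lt hkh
  rw [show k + d + 1 - k = d + 1 by omega, show k + d + 1 = k + (d + 1) by omega,
    sum_range_add f k (d + 1)]
  exact add_lt_add_right (sum_lt_sum_of_nonempty nonempty_range_add_one fun i _ => hgf i) _

theorem exists_forall_lt_of_monotone_tendsto {ρQ ρΦ : ℕ → ℝ} {vstar v : ℝ}
    (hΦmono : Monotone ρΦ) (hv : v < vstar)
    (hQlim : Tendsto ρQ atTop (nhds vstar)) (hΦlim : Tendsto ρΦ atTop (nhds v)) :
    ∃ N, ∀ n, N ≤ n → ∀ m, ρΦ m < ρQ n := by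
  obtain ⟨N, hN⟩ := (hQlim.eventually (eventually_gt_nhds hv)).exists_forall_of_atTop
  exact ⟨N, fun n hn m => (hΦmono.ge_of_tendsto hΦlim m).trans_lt (hN n hn)⟩

theorem stmt13_general (ρQ ρΦ : ℕ → ℝ) (hΦmono : Monotone ρΦ)
    (vstar v : ℝ) (hv : v < vstar)
    (hQlim : Tendsto ρQ atTop (nhds vstar)) (hΦlim : Tendsto ρΦ atTop (nhds v)) :
    ∃ N : ℕ, ∀ nQ : ℕ, N ≤ nQ → ∀ nΦ : ℕ, ∃ H : ℕ, ∀ h : ℕ, H ≤ h → ∀ k : ℕ, k < h →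
      (∑ i ∈ Finset.range k, ρQ (nQ + i + 1)) +
        (∑ i ∈ Finset.range (h - k), ρΦ (nΦ + i + 1)) <
      ∑ i ∈ Finset.range h, ρQ (nQ + i + 1) := by
  obtain ⟨N, hN⟩ := exists_forall_lt_of_monotone_tendsto hΦmono hv hQlim hΦlim
  refine ⟨N, fun nQ hnQ nΦ => ⟨0, fun h _ k hk => ?_⟩⟩
  exact sum_range_add_sum_range_sub_lt hk fun i => hN _ (by omega) _

/-- Policy invariance of RPIES in the limit: if the nondecreasing reward sequence of the
Q arm converges to the optimal value `v*` while that of the Φ arm converges to `v < v*`,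
then there is `N` such that whenever the Q arm has already been pulled `n_Q ≥ N` times
(and the Φ arm `n_Φ` times), for all sufficiently many remaining rounds `h`, pulling only
Q for the `h` remaining rounds has strictly higher expected value than any policy pulling
Φ at least once, i.e. any split of the `h` rounds into `k` Q-pulls and `h - k` Φ-pulls
with `k < h`. -/
theorem stmt13 (ρQ ρΦ : ℕ → ℝ) (hQmono : Monotone ρQ) (hΦmono : Monotone ρΦ)
    (vstar v : ℝ) (hv : v < vstar)
    (hQlim : Tendsto ρQ atTop (nhds vstar)) (hΦlim : Tendsto ρΦ atTop (nhds v)) :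
    ∃ N : ℕ, ∀ nQ : ℕ, N ≤ nQ → ∀ nΦ : ℕ, ∃ H : ℕ, ∀ h : ℕ, H ≤ h → ∀ k : ℕ, k < h →
      (∑ i ∈ Finset.range k, ρQ (nQ + i + 1)) +
        (∑ i ∈ Finset.range (h - k), ρΦ (nΦ + i + 1)) <
      ∑ i ∈ Finset.range h, ρQ (nQ + i + 1) :=
  stmt13_general ρQ ρΦ hΦmono vstar v hv hQlim hΦlim
end
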